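/- Let Λ > 0 and C > 0 be real constants, and let E : [T₀, ∞) → ℝ be a differentiable nonnegative function satisfying E'(T) ≤ -2Λ·E(T) + 2C·E(T)^{3/2} for all T ≥ T₀, with 0 < E(T₀) < Λ²/C². Then E(T) → 0 as T → ∞. -/

import Mathlib

/-!
Choose `b` with `E T₀ < b < Λ² / C²`, so that `μ := Λ - C √b > 0`. As long as `0 ≤ E ≤ b`,
`-2ΛE + 2C E^{3/2} = -2E (Λ - C √E) ≤ -2μ E`; at the level `E = b` this is strictly negative,
so `E` can never cross `b`. Hence `E' ≤ -2μ E` for all times, and `E` decays exponentially.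
-/

open Filter Real Set Topology

theorem rpow_three_halves_eq_mul_sqrt {x : ℝ} (hx : 0 ≤ x) : x ^ ((3 : ℝ) / 2) = x * √x := by
  rw [sqrt_eq_rpow, show (3 : ℝ) / 2 = 1 + 1 / 2 by norm_num, rpow_add' hx (by norm_num),
    rpow_one]

theorem mul_sqrt_lt_of_lt_div_sq {Λ C b : ℝ} (hΛ : 0 < Λ) (hC : 0 < C) (hb : b < Λ ^ 2 / C ^ 2) :
    C * √b < Λ := by
  have : √b < Λ / C := by
    rwa [sqrt_lt' (by positivity), div_pow]
  rwa [lt_div_iff₀ hC, mul_comm] at this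

theorem neg_mul_add_mul_rpow_le_of_le {Λ C b y : ℝ} (hC : 0 ≤ C) (hy : 0 ≤ y) (hyb : y ≤ b) :
    -2 * Λ * y + 2 * C * y ^ ((3 : ℝ) / 2) ≤ -(2 * (Λ - C * √b)) * y := by
  have : C * (y * √y) ≤ C * (y * √b) := by gcongr
  rw [rpow_three_halves_eq_mul_sqrt hy]
  linarith

theorem le_of_deriv_neg_of_eq {f : ℝ → ℝ} {a b : ℝ} (hf : ∀ x ≥ a, DifferentiableAt ℝ f x)
    (ha : f a < b) (hb : ∀ x ≥ a, f x = b → deriv f x < 0) : ∀ x ≥ a, f x ≤ b :=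
  fun _ hx => image_le_of_deriv_right_lt_deriv_boundary (B := fun _ => b) (B' := fun _ => 0)
    (fun y hy => (hf y hy.1).continuousAt.continuousWithinAt)
    (fun y hy => (hf y hy.1).hasDerivAt.hasDerivWithinAt) ha.le (fun y => hasDerivAt_const y b)
    (fun y hy => hb y hy.1) (right_mem_Icc.2 hx)

theorem le_mul_exp_of_deriv_le_neg_mul {f : ℝ → ℝ} {a k : ℝ}
    (hf : ∀ x ≥ a, DifferentiableAt ℝ f x) (hderiv : ∀ x ≥ a, deriv f x ≤ -k * f x) :
    ∀ x ≥ a, f x ≤ f a * exp (-k * (x - a)) := by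
  set g : ℝ → ℝ := fun x => f x * exp (k * (x - a))
  have hg : ∀ x ≥ a, HasDerivAt g (deriv f x * exp (k * (x - a)) +
      f x * (exp (k * (x - a)) * k)) x := fun x hx =>
    (hf x hx).hasDerivAt.mul
      (by simpa using ((hasDerivAt_id x).sub_const a).const_mul k |>.exp)
  have hanti : AntitoneOn g (Ici a) := by
    apply antitoneOn_of_deriv_nonpos (convex_Ici a)
      (fun x hx => (hg x hx).continuousAt.continuousWithinAt)
    all_goals intro x hx; rw [interior_Ici] at hx
    · exact (hg x hx.le).differentiableAt.differentiableWithinAt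
    · rw [(hg x hx.le).deriv]
      have := mul_le_mul_of_nonneg_right (hderiv x hx.le) (exp_pos (k * (x - a))).le
      linarith
  intro x hx
  have hgx : g x ≤ g a := hanti self_mem_Ici hx hx
  simp only [g, sub_self, mul_zero, exp_zero, mul_one] at hgx
  rwa [neg_mul, exp_neg, ← div_eq_mul_inv, le_div_iff₀ (exp_pos _)]

theorem tendsto_zero_of_deriv_le_neg_mul {f : ℝ → ℝ} {a k : ℝ} (hk : 0 < k)
    (hf : ∀ x ≥ a, DifferentiableAt ℝ f x) (hnonneg : ∀ x ≥ a, 0 ≤ f x)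
    (hderiv : ∀ x ≥ a, deriv f x ≤ -k * f x) : Tendsto f atTop (𝓝 0) := by
  have hexp : Tendsto (fun x => f a * exp (-k * (x - a))) atTop (𝓝 0) := by
    simpa [sub_eq_add_neg] using tendsto_exp_atBot.comp
      ((tendsto_atTop_add_const_right _ (-a) tendsto_id).const_mul_atTop_of_neg (neg_neg_of_pos hk))
      |>.const_mul (f a)
  exact squeeze_zero' (eventually_atTop.2 ⟨a, hnonneg⟩)
    (eventually_atTop.2 ⟨a, le_mul_exp_of_deriv_le_neg_mul hf hderiv⟩) hexp

theorem energy_decays_to_zero_general (Λ C T₀ : ℝ) (hΛ : 0 < Λ) (hC : 0 < C) (E : ℝ → ℝ)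
    (hdiff : ∀ T ≥ T₀, DifferentiableAt ℝ E T)
    (hnonneg : ∀ T ≥ T₀, 0 ≤ E T)
    (hineq : ∀ T ≥ T₀, deriv E T ≤ -2 * Λ * E T + 2 * C * (E T) ^ ((3 : ℝ) / 2))
    (hsmall : E T₀ < Λ ^ 2 / C ^ 2) :
    Filter.Tendsto E Filter.atTop (nhds 0) := by
  obtain ⟨b, hEb, hbΛ⟩ := exists_between hsmall
  have hb : 0 < b := (hnonneg T₀ le_rfl).trans_lt hEb
  have hμ : 0 < Λ - C * √b := sub_pos.2 (mul_sqrt_lt_of_lt_div_sq hΛ hC hbΛ)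
  have hlinear : ∀ T ≥ T₀, E T ≤ b → deriv E T ≤ -(2 * (Λ - C * √b)) * E T := fun T hT hTb =>
    (hineq T hT).trans (neg_mul_add_mul_rpow_le_of_le hC.le (hnonneg T hT) hTb)
  have hbelow : ∀ T ≥ T₀, E T ≤ b := le_of_deriv_neg_of_eq hdiff hEb fun T hT hTb => by
    have := hlinear T hT hTb.le
    rw [hTb] at this
    nlinarith
  exact tendsto_zero_of_deriv_le_neg_mul (by positivity) hdiff hnonneg
    fun T hT => hlinear T hT (hbelow T hT)

theorem energy_decays_to_zero (Λ C T₀ : ℝ) (hΛ : 0 < Λ) (hC : 0 < C) (E : ℝ → ℝ)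
    (hdiff : ∀ T ≥ T₀, DifferentiableAt ℝ E T)
    (hnonneg : ∀ T ≥ T₀, 0 ≤ E T)
    (hineq : ∀ T ≥ T₀, deriv E T ≤ -2 * Λ * E T + 2 * C * (E T) ^ ((3 : ℝ) / 2))
    (hpos : 0 < E T₀) (hsmall : E T₀ < Λ ^ 2 / C ^ 2) :
    Filter.Tendsto E Filter.atTop (nhds 0) :=
  energy_decays_to_zero_general Λ C T₀ hΛ hC E hdiff hnonneg hineq hsmall
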